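/- Let k ∈ [2,n], a^1(t),…,a^k(t) ∈ ℝ^n satisfy the hypotheses of the exponential-decay wedge lemma (at least one a^j decaying like γ₁e^{−βt}‖a^j(0)‖ and the rest uniformly bounded by γ₂‖a^{i}(0)‖, with respect to a monotonic norm), and suppose a^1(0) ∧ ⋯ ∧ a^k(0) ≠ 0. Then there exist constants γ̄, β̄ > 0 such that ‖a^1(t) ∧ ⋯ ∧ a^k(t)‖ ≤ γ̄ e^{−β̄ t} ‖a^1(0) ∧ ⋯ ∧ a^k(0)‖ for all t ≥ 0. -/
import Mathlib


/-- The wedge product `a¹ ∧ ⋯ ∧ a^k` of k vectors in ℝⁿ, identified with the vector of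
k×k minors of the n×k matrix `[a¹ ⋯ a^k]`, indexed by k-element row subsets. -/
noncomputable def wedge {n k : ℕ} (a : Fin k → Fin n → ℝ) :
    {s : Finset (Fin n) // s.card = k} → ℝ :=
  fun I => Matrix.det (Matrix.of fun i j : Fin k => a j ((I.1.orderIsoOfFin I.2 i : Fin n)))

/-- A family of monotonic norms, one on each finite-dimensional coordinate space
(e.g. the family of L_p norms): positive definite, homogeneous, subadditive, and
monotonic (entrywise domination of absolute values implies domination of norms). -/
structure MonotonicNormFamily where
  N : ∀ (ι : Type) [Fintype ι], (ι → ℝ) → ℝ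
  nonneg : ∀ (ι : Type) [Fintype ι] (x : ι → ℝ), 0 ≤ N ι x
  eq_zero_iff : ∀ (ι : Type) [Fintype ι] (x : ι → ℝ), N ι x = 0 ↔ x = 0
  add_le : ∀ (ι : Type) [Fintype ι] (x y : ι → ℝ), N ι (x + y) ≤ N ι x + N ι y
  smul_eq : ∀ (ι : Type) [Fintype ι] (c : ℝ) (x : ι → ℝ), N ι (c • x) = |c| * N ι x
  mono : ∀ (ι : Type) [Fintype ι] (x y : ι → ℝ), (∀ i, |x i| ≤ |y i|) → N ι x ≤ N ι y

lemma MonotonicNormFamily.coord_mul_le (F : MonotonicNormFamily) {ι : Type} [Fintype ι] [DecidableEq ι]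
    (x : ι → ℝ) (i : ι) : |x i| * F.N ι (Pi.single i 1) ≤ F.N ι x := by
  have h := F.mono ι (x i • (Pi.single i 1 : ι → ℝ)) x ?_
  · rwa [F.smul_eq] at h
  · intro j
    by_cases hj : j = i
    · subst hj; simp [Pi.single_apply]
    · simp [Pi.single_apply, hj, abs_nonneg]

lemma MonotonicNormFamily.single_pos (F : MonotonicNormFamily) {ι : Type} [Fintype ι] [DecidableEq ι]
    (i : ι) : 0 < F.N ι (Pi.single i 1) := by
  refine lt_of_le_of_ne (F.nonneg ι _) (fun h => ?_)
  have := (F.eq_zero_iff ι (Pi.single i 1)).1 h.symm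
  have := congrFun this i
  simp at this

/-- If moreover the initial wedge product is nonzero, the wedge product admits an
exponential bound in terms of its own initial norm. -/
theorem wedge_exp_decay_initial {n k ℓ : ℕ} (hk2 : 2 ≤ k) (hkn : k ≤ n)
    (hℓ1 : 1 ≤ ℓ) (hℓk : ℓ ≤ k - 1)
    (F : MonotonicNormFamily) (a : Fin k → ℝ → Fin n → ℝ)
    (γ₁ γ₂ β : ℝ) (hγ₁ : 1 ≤ γ₁) (hγ₂ : 1 ≤ γ₂) (hβ : 0 < β)
    (hdec : ∀ j : Fin k, (j : ℕ) < ℓ → ∀ t : ℝ, 0 ≤ t →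
      F.N (Fin n) (a j t) ≤ γ₁ * Real.exp (-β * t) * F.N (Fin n) (a j 0))
    (hbd : ∀ j : Fin k, ℓ ≤ (j : ℕ) → ∀ t : ℝ, 0 ≤ t →
      F.N (Fin n) (a j t) ≤ γ₂ * F.N (Fin n) (a j 0))
    (h0 : wedge (fun j => a j 0) ≠ 0) :
    ∃ γbar βbar : ℝ, 0 < γbar ∧ 0 < βbar ∧ ∀ t : ℝ, 0 ≤ t →
      F.N {s : Finset (Fin n) // s.card = k} (wedge (fun j => a j t)) ≤
        γbar * Real.exp (-βbar * t) *
          F.N {s : Finset (Fin n) // s.card = k} (wedge (fun j => a j 0)) := by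
  haveI : NeZero n := ⟨by omega⟩
  -- minimum norm of a coordinate vector
  set m : ℝ := Finset.univ.inf' Finset.univ_nonempty
      (fun r : Fin n => F.N (Fin n) (Pi.single r 1)) with hm_def
  have hm : 0 < m := by
    rw [hm_def, Finset.lt_inf'_iff]
    exact fun r _ => F.single_pos r
  -- entrywise bound from the norm
  have hentry : ∀ (x : Fin n → ℝ) (r : Fin n), |x r| ≤ m⁻¹ * F.N (Fin n) x := by
    intro x r
    have h1 : m ≤ F.N (Fin n) (Pi.single r 1) := Finset.inf'_le _ (Finset.mem_univ r)
    have h2 : |x r| * m ≤ F.N (Fin n) x := by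
      calc |x r| * m ≤ |x r| * F.N (Fin n) (Pi.single r 1) := by
            exact mul_le_mul_of_nonneg_left h1 (abs_nonneg _)
        _ ≤ F.N (Fin n) x := F.coord_mul_le x r
    rw [inv_mul_eq_div, le_div_iff₀ hm]
    exact h2
  -- determinant bound for each minor
  have hdet : ∀ (t : ℝ) (I : {s : Finset (Fin n) // s.card = k}),
      |wedge (fun j => a j t) I| ≤
        (Nat.factorial k : ℝ) * ∏ j : Fin k, (m⁻¹ * F.N (Fin n) (a j t)) := by
    intro t I
    unfold wedge
    rw [Matrix.det_apply]
    refine (Finset.abs_sum_le_sum_abs _ _).trans ?_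
    have hσ : ∀ σ : Equiv.Perm (Fin k),
        |Equiv.Perm.sign σ • ∏ i, (Matrix.of fun i j : Fin k =>
            a j t ((I.1.orderIsoOfFin I.2 i : Fin n))) (σ i) i| ≤
          ∏ j : Fin k, (m⁻¹ * F.N (Fin n) (a j t)) := by
      intro σ
      have hs : |Equiv.Perm.sign σ • ∏ i, (Matrix.of fun i j : Fin k =>
            a j t ((I.1.orderIsoOfFin I.2 i : Fin n))) (σ i) i| =
          |∏ i, (Matrix.of fun i j : Fin k =>
            a j t ((I.1.orderIsoOfFin I.2 i : Fin n))) (σ i) i| := by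
        rcases Int.units_eq_one_or (Equiv.Perm.sign σ) with h | h <;> rw [h] <;> simp
      rw [hs, Finset.abs_prod]
      refine Finset.prod_le_prod (fun i _ => abs_nonneg _) (fun i _ => ?_)
      exact hentry (a i t) _
    calc ∑ σ : Equiv.Perm (Fin k), |Equiv.Perm.sign σ • ∏ i, (Matrix.of fun i j : Fin k =>
            a j t ((I.1.orderIsoOfFin I.2 i : Fin n))) (σ i) i|
        ≤ ∑ _σ : Equiv.Perm (Fin k), ∏ j : Fin k, (m⁻¹ * F.N (Fin n) (a j t)) :=
          Finset.sum_le_sum (fun σ _ => hσ σ)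
      _ = (Nat.factorial k : ℝ) * ∏ j : Fin k, (m⁻¹ * F.N (Fin n) (a j t)) := by
          rw [Finset.sum_const, Finset.card_univ, Fintype.card_perm, Fintype.card_fin,
            nsmul_eq_mul]
  -- product bound
  set j0 : Fin k := ⟨0, by omega⟩ with hj0_def
  have hprod : ∀ t : ℝ, 0 ≤ t →
      ∏ j : Fin k, F.N (Fin n) (a j t) ≤
        γ₁ * (γ₁ * γ₂) ^ (k - 1) * Real.exp (-β * t) *
          ∏ j : Fin k, F.N (Fin n) (a j 0) := by
    intro t ht
    have hexp1 : Real.exp (-β * t) ≤ 1 := by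
      rw [Real.exp_le_one_iff]
      nlinarith
    have hexp0 : 0 < Real.exp (-β * t) := Real.exp_pos _
    have hsplit : ∀ s : ℝ, ∏ j : Fin k, F.N (Fin n) (a j s) =
        F.N (Fin n) (a j0 s) * ∏ j ∈ Finset.univ.erase j0, F.N (Fin n) (a j s) :=
      fun s => (Finset.mul_prod_erase _ _ (Finset.mem_univ j0)).symm
    rw [hsplit t, hsplit 0]
    have h1 : F.N (Fin n) (a j0 t) ≤ γ₁ * Real.exp (-β * t) * F.N (Fin n) (a j0 0) :=
      hdec j0 (by simp [hj0_def]; omega) t ht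
    have h2 : ∏ j ∈ Finset.univ.erase j0, F.N (Fin n) (a j t) ≤
        ∏ j ∈ Finset.univ.erase j0, (γ₁ * γ₂ * F.N (Fin n) (a j 0)) := by
      refine Finset.prod_le_prod (fun j _ => F.nonneg _ _) (fun j _ => ?_)
      by_cases hj : (j : ℕ) < ℓ
      · calc F.N (Fin n) (a j t) ≤ γ₁ * Real.exp (-β * t) * F.N (Fin n) (a j 0) :=
              hdec j hj t ht
          _ ≤ γ₁ * γ₂ * F.N (Fin n) (a j 0) := by
              have hN := F.nonneg (Fin n) (a j 0)
              have hγ₂' : Real.exp (-β * t) ≤ γ₂ := hexp1.trans hγ₂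
              exact mul_le_mul_of_nonneg_right
                (mul_le_mul_of_nonneg_left hγ₂' (by linarith)) hN
      · calc F.N (Fin n) (a j t) ≤ γ₂ * F.N (Fin n) (a j 0) := hbd j (by omega) t ht
          _ ≤ γ₁ * γ₂ * F.N (Fin n) (a j 0) := by
              have hN := F.nonneg (Fin n) (a j 0)
              rw [mul_assoc]
              exact le_mul_of_one_le_left (mul_nonneg (by linarith) hN) hγ₁
    have h3 : ∏ j ∈ Finset.univ.erase j0, (γ₁ * γ₂ * F.N (Fin n) (a j 0)) =
        (γ₁ * γ₂) ^ (k - 1) * ∏ j ∈ Finset.univ.erase j0, F.N (Fin n) (a j 0) := by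
      rw [Finset.prod_mul_distrib, Finset.prod_const, Finset.card_erase_of_mem
        (Finset.mem_univ j0), Finset.card_univ, Fintype.card_fin]
    have hnn1 : 0 ≤ F.N (Fin n) (a j0 t) := F.nonneg _ _
    have hnn2 : 0 ≤ ∏ j ∈ Finset.univ.erase j0, F.N (Fin n) (a j t) :=
      Finset.prod_nonneg (fun j _ => F.nonneg _ _)
    have hnn3 : 0 ≤ γ₁ * Real.exp (-β * t) * F.N (Fin n) (a j0 0) := by
      have := F.nonneg (Fin n) (a j0 0); positivity
    calc F.N (Fin n) (a j0 t) * ∏ j ∈ Finset.univ.erase j0, F.N (Fin n) (a j t)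
        ≤ (γ₁ * Real.exp (-β * t) * F.N (Fin n) (a j0 0)) *
            ((γ₁ * γ₂) ^ (k - 1) * ∏ j ∈ Finset.univ.erase j0, F.N (Fin n) (a j 0)) := by
          rw [← h3]
          exact mul_le_mul h1 h2 hnn2 hnn3
      _ = γ₁ * (γ₁ * γ₂) ^ (k - 1) * Real.exp (-β * t) *
            (F.N (Fin n) (a j0 0) * ∏ j ∈ Finset.univ.erase j0, F.N (Fin n) (a j 0)) := by
          ring
  -- constants
  set P0 : ℝ := ∏ j : Fin k, F.N (Fin n) (a j 0) with hP0_def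
  have hP0nn : 0 ≤ P0 := Finset.prod_nonneg (fun j _ => F.nonneg _ _)
  set K : ℝ := (Nat.factorial k : ℝ) * (m⁻¹) ^ k * (γ₁ * (γ₁ * γ₂) ^ (k - 1)) * P0 with hK_def
  have hKnn : 0 ≤ K := by
    have h1 : (0:ℝ) ≤ γ₁ := by linarith
    have h2 : (0:ℝ) ≤ γ₂ := by linarith
    positivity
  -- entrywise bound on the wedge
  have hwedge_entry : ∀ (t : ℝ), 0 ≤ t → ∀ I,
      |wedge (fun j => a j t) I| ≤ K * Real.exp (-β * t) := by
    intro t ht I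
    refine (hdet t I).trans ?_
    have hstep : ∏ j : Fin k, (m⁻¹ * F.N (Fin n) (a j t)) =
        (m⁻¹) ^ k * ∏ j : Fin k, F.N (Fin n) (a j t) := by
      rw [Finset.prod_mul_distrib, Finset.prod_const, Finset.card_univ, Fintype.card_fin]
    rw [hstep, hK_def]
    have hminv : (0:ℝ) ≤ (m⁻¹) ^ k := by positivity
    have hfact : (0:ℝ) ≤ (Nat.factorial k : ℝ) := Nat.cast_nonneg _
    calc (Nat.factorial k : ℝ) * ((m⁻¹) ^ k * ∏ j : Fin k, F.N (Fin n) (a j t))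
        ≤ (Nat.factorial k : ℝ) * ((m⁻¹) ^ k *
            (γ₁ * (γ₁ * γ₂) ^ (k - 1) * Real.exp (-β * t) * P0)) :=
          mul_le_mul_of_nonneg_left (mul_le_mul_of_nonneg_left (hprod t ht) hminv) hfact
      _ = (Nat.factorial k : ℝ) * (m⁻¹) ^ k * (γ₁ * (γ₁ * γ₂) ^ (k - 1)) * P0 *
            Real.exp (-β * t) := by ring
  -- norm bound on the wedge via monotonicity
  set NW : ℝ → ℝ := fun t => F.N {s : Finset (Fin n) // s.card = k} (wedge (fun j => a j t))
    with hNW_def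
  set one : {s : Finset (Fin n) // s.card = k} → ℝ := fun _ => 1 with hone_def
  have hNone : 0 ≤ F.N _ one := F.nonneg _ _
  have hwedge_norm : ∀ t : ℝ, 0 ≤ t →
      NW t ≤ K * Real.exp (-β * t) * F.N _ one := by
    intro t ht
    have hmono := F.mono {s : Finset (Fin n) // s.card = k}
      (wedge (fun j => a j t)) ((K * Real.exp (-β * t)) • one) (fun I => by
        have h1 := hwedge_entry t ht I
        have h2 : |((K * Real.exp (-β * t)) • one) I| = K * Real.exp (-β * t) := by
          simp [hone_def, abs_of_nonneg, mul_nonneg hKnn (Real.exp_pos _).le]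
        rw [h2]; exact h1)
    rw [F.smul_eq, abs_of_nonneg (mul_nonneg hKnn (Real.exp_pos _).le)] at hmono
    exact hmono
  -- the initial wedge norm is positive
  have hW0 : 0 < NW 0 := by
    refine lt_of_le_of_ne (F.nonneg _ _) (fun h => h0 ?_)
    exact (F.eq_zero_iff _ _).1 h.symm
  refine ⟨K * F.N _ one / NW 0 + 1, β, by positivity, hβ, fun t ht => ?_⟩
  have key : NW t ≤ (K * F.N _ one / NW 0) * Real.exp (-β * t) * NW 0 := by
    have : (K * F.N _ one / NW 0) * Real.exp (-β * t) * NW 0 =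
        K * Real.exp (-β * t) * F.N _ one := by
      field_simp
    rw [this]
    exact hwedge_norm t ht
  have hextra : 0 ≤ Real.exp (-β * t) * NW 0 := by positivity
  calc NW t ≤ (K * F.N _ one / NW 0) * Real.exp (-β * t) * NW 0 := key
    _ ≤ (K * F.N _ one / NW 0 + 1) * Real.exp (-β * t) * NW 0 := by nlinarith
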